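/- arXiv:1106.3223 — 6 statements merged into one kernel-verified Lean document; each statement's English description precedes it below -/
import Mathlib

section
/- Let R be a ring with 1, n ≥ 1, and A an n×n matrix over R. The symmetric characteristic polynomial p(x) = s-det(xI − A) ∈ R[x] has degree at most n, and its coefficient of x^n equals n! (i.e., p(x) = λ_0 + λ_1 x + ⋯ + λ_{n−1} x^{n−1} + n!·x^n for some λ_0,…,λ_{n−1} ∈ R). -/
/-!
Every term of a preadjoint entry is a product of `n - 1` matrix entries, so if all entries of
`M` have degree at most `d`, taking `x^d`-coefficients entrywise commutes with taking top
coefficients of `M*` and of `s-det M`. The entries of `x·I - A` have degree at most one with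
`x`-coefficients forming `I`, so the `x^n`-coefficient of `s-det(x·I - A)` is `s-det I`.
In `I*` only `ρ = 1` contributes, once for each of the `(n-1)!` permutations `τ` fixing `s`,
so `I* = (n-1)!·I` and `s-det I = n·(n-1)! = n!`.
-/

open Polynomial in
/-- The preadjoint `A*` of an `n × n` matrix `A` over a (possibly noncommutative) ring `R`:
its `(r, s)` entry is the sum, over all permutations `τ, ρ` of `Fin n` with `τ s = s` and
`ρ s = r`, of `sgn ρ` times the ordered product
`a_{τ(1),ρ(τ(1))} ⋯ a_{τ(s-1),ρ(τ(s-1))} · a_{τ(s+1),ρ(τ(s+1))} ⋯ a_{τ(n),ρ(τ(n))}`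
(the factor at position `s` is omitted). -/
def Matrix.preadjoint {n : ℕ} {R : Type*} [Ring R] (A : Matrix (Fin n) (Fin n) R) :
    Matrix (Fin n) (Fin n) R :=
  fun r s =>
    ∑ τ : Equiv.Perm (Fin n), ∑ ρ : Equiv.Perm (Fin n),
      if τ s = s ∧ ρ s = r then
        ((Equiv.Perm.sign ρ : ℤ)) •
          (((List.finRange n).filter (fun k => k ≠ s)).map
            (fun k => A (τ k) (ρ (τ k)))).prod
      else 0

open Polynomial in
/-- The characteristic matrix `x·I - A` of `A`, as a matrix over `R[x]`. -/
noncomputable def Matrix.charMat {n : ℕ} {R : Type*} [Ring R] (A : Matrix (Fin n) (Fin n) R) :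
    Matrix (Fin n) (Fin n) R[X] :=
  (X : R[X]) • (1 : Matrix (Fin n) (Fin n) R[X]) - A.map C

/-- The symmetric determinant `s-det A = tr(A* · A) = tr(A · A*)`. -/
def Matrix.sdet {n : ℕ} {R : Type*} [Ring R] (A : Matrix (Fin n) (Fin n) R) : R :=
  Matrix.trace (A.preadjoint * A)

open Polynomial in
/-- The symmetric characteristic polynomial `p(x) = s-det(x·I - A) ∈ R[x]`. -/
noncomputable def Matrix.sCharPoly {n : ℕ} {R : Type*} [Ring R] (A : Matrix (Fin n) (Fin n) R) : R[X] :=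
  A.charMat.sdet

theorem Equiv.Perm.eq_one_of_forall_ne_apply_eq {α : Type*} {σ : Equiv.Perm α} {s : α}
    (h : ∀ j, j ≠ s → σ j = j) : σ = 1 := by
  ext j
  by_cases hj : j = s
  · subst hj
    by_contra hne
    exact hne (σ.injective (h (σ j) hne))
  · exact h j hj

theorem Equiv.Perm.card_fixing_eq_factorial {α : Type*} [Fintype α] [DecidableEq α] (s : α) :
    Fintype.card {σ : Equiv.Perm α // σ s = s} = (Fintype.card α - 1).factorial := by
  calc Fintype.card {σ : Equiv.Perm α // σ s = s}
      = Fintype.card {σ : Equiv.Perm α // ∀ a, ¬a ≠ s → σ a = a} :=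
        Fintype.card_congr (Equiv.subtypeEquivRight (by simp))
    _ = Fintype.card (Equiv.Perm {a // a ≠ s}) :=
        (Fintype.card_congr (Equiv.Perm.subtypeEquivSubtypePerm _)).symm
    _ = (Fintype.card α - 1).factorial := by
        rw [Fintype.card_perm, Fintype.card_subtype_compl, Fintype.card_subtype_eq]

theorem List.length_filter_finRange_ne {n : ℕ} (s : Fin n) :
    ((List.finRange n).filter (fun k => k ≠ s)).length = n - 1 := by
  rw [List.filter_congr (q := (· != s)) (fun k _ => by by_cases h : k = s <;> simp [h]),
    ← (List.nodup_finRange n).erase_eq_filter]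
  simp

namespace Polynomial

theorem natDegree_list_prod_le_of_forall_le {R : Type*} [Semiring R] {d : ℕ}
    {l : List R[X]} (h : ∀ p ∈ l, p.natDegree ≤ d) : l.prod.natDegree ≤ l.length * d :=
  (natDegree_list_prod_le l).trans <| by
    simpa using List.sum_le_card_nsmul (l.map natDegree) d (by simpa using h)

end Polynomial

namespace Matrix

open Polynomial

variable {R : Type*} [Ring R] {n : ℕ}

theorem sdet_eq_sum (M : Matrix (Fin n) (Fin n) R) :
    M.sdet = ∑ i, ∑ j, M.preadjoint i j * M j i :=
  rfl

theorem list_prod_one_apply_filter_ne {τ ρ : Equiv.Perm (Fin n)} {s : Fin n} (hτ : τ s = s) :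
    (((List.finRange n).filter (fun k => k ≠ s)).map
        fun k => (1 : Matrix (Fin n) (Fin n) R) (τ k) (ρ (τ k))).prod =
      if ∀ j, j ≠ s → ρ j = j then 1 else 0 := by
  split_ifs with hρ
  · refine List.prod_eq_one ?_
    simp only [List.mem_map, List.mem_filter, List.mem_finRange, true_and, decide_eq_true_eq]
    rintro _ ⟨k, hk, rfl⟩
    rw [hρ _ (hτ ▸ τ.injective.ne hk), one_apply_eq]
  · push Not at hρ
    obtain ⟨j, hj, hρj⟩ := hρ
    refine List.prod_eq_zero (List.mem_map.mpr ⟨τ.symm j, ?_, ?_⟩)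
    · simpa [List.mem_filter, Equiv.symm_apply_eq, hτ] using hj
    · rw [Equiv.apply_symm_apply, one_apply_ne (Ne.symm hρj)]

theorem preadjoint_one_apply (r s : Fin n) :
    (1 : Matrix (Fin n) (Fin n) R).preadjoint r s =
      if r = s then ((n - 1).factorial : R) else 0 := by
  have hterm : ∀ τ ρ : Equiv.Perm (Fin n), (if τ s = s ∧ ρ s = r then
      (Equiv.Perm.sign ρ : ℤ) • (((List.finRange n).filter (fun k => k ≠ s)).map
        fun k => (1 : Matrix (Fin n) (Fin n) R) (τ k) (ρ (τ k))).prod else 0) =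
      if ρ = 1 ∧ τ s = s ∧ r = s then 1 else 0 := by
    intro τ ρ
    by_cases hτ : τ s = s
    · rw [list_prod_one_apply_filter_ne hτ]
      by_cases hρ : ∀ j, j ≠ s → ρ j = j
      · obtain rfl := Equiv.Perm.eq_one_of_forall_ne_apply_eq hρ
        simp [hτ, eq_comm]
      · have : ρ ≠ 1 := fun h => hρ (by simp [h])
        simp [hρ, this]
    · simp [hτ]
  simp only [preadjoint, hterm]
  split_ifs with hrs
  · subst hrs
    simp only [and_true, ite_and, Finset.sum_ite_eq', Finset.mem_univ, if_true, Finset.sum_boole]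
    rw [← Fintype.card_subtype, Equiv.Perm.card_fixing_eq_factorial, Fintype.card_fin]
  · simp [hrs]

theorem sdet_one (hn : 1 ≤ n) : (1 : Matrix (Fin n) (Fin n) R).sdet = (n.factorial : R) := by
  simp only [sdet_eq_sum, preadjoint_one_apply, one_apply, mul_ite, mul_one, mul_zero]
  simp [← Nat.cast_mul, Nat.mul_factorial_pred (Nat.one_le_iff_ne_zero.mp hn)]

section DegreeBounded

variable {d : ℕ} {M : Matrix (Fin n) (Fin n) R[X]}

theorem natDegree_preadjoint_apply_le (hM : ∀ i j, (M i j).natDegree ≤ d) (r s : Fin n) :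
    (M.preadjoint r s).natDegree ≤ (n - 1) * d := by
  refine natDegree_sum_le_of_forall_le _ _ fun τ _ =>
    natDegree_sum_le_of_forall_le _ _ fun ρ _ => ?_
  split_ifs
  · refine (natDegree_smul_le _ _).trans ?_
    rw [← List.length_filter_finRange_ne s,
      ← List.length_map (f := fun k => M (τ k) (ρ (τ k)))]
    exact natDegree_list_prod_le_of_forall_le (by simp [hM])
  · simp

theorem coeff_preadjoint_apply (hM : ∀ i j, (M i j).natDegree ≤ d) (r s : Fin n) :
    (M.preadjoint r s).coeff ((n - 1) * d) =
      (M.map fun p : R[X] => p.coeff d).preadjoint r s := by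
  simp only [preadjoint, finsetSum_coeff]
  refine Finset.sum_congr rfl fun τ _ => Finset.sum_congr rfl fun ρ _ => ?_
  split_ifs
  · rw [coeff_smul, ← List.length_filter_finRange_ne s,
      ← List.length_map (f := fun k => M (τ k) (ρ (τ k))),
      coeff_list_prod_of_natDegree_le _ _ (by simp [hM]), List.map_map]
    rfl
  · simp

theorem natDegree_sdet_le (hM : ∀ i j, (M i j).natDegree ≤ d) : M.sdet.natDegree ≤ n * d := by
  rw [sdet_eq_sum]
  refine natDegree_sum_le_of_forall_le _ _ fun i _ =>
    natDegree_sum_le_of_forall_le _ _ fun j _ => ?_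
  have hnd : (n - 1) * d + d = n * d := by
    rw [← Nat.succ_mul, Nat.succ_eq_add_one, Nat.sub_add_cancel i.pos]
  exact hnd ▸ natDegree_mul_le_of_le (natDegree_preadjoint_apply_le hM i j) (hM j i)

theorem coeff_sdet (hM : ∀ i j, (M i j).natDegree ≤ d) :
    M.sdet.coeff (n * d) = (M.map fun p : R[X] => p.coeff d).sdet := by
  simp only [sdet_eq_sum, finsetSum_coeff]
  refine Finset.sum_congr rfl fun i _ => Finset.sum_congr rfl fun j _ => ?_
  have hnd : (n - 1) * d + d = n * d := by
    rw [← Nat.succ_mul, Nat.succ_eq_add_one, Nat.sub_add_cancel i.pos]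
  rw [← hnd, coeff_mul_add_eq_of_natDegree_le (natDegree_preadjoint_apply_le hM i j) (hM j i),
    coeff_preadjoint_apply hM, map_apply]

end DegreeBounded

theorem natDegree_charMat_apply_le (A : Matrix (Fin n) (Fin n) R) (i j : Fin n) :
    (A.charMat i j).natDegree ≤ 1 := by
  simp only [charMat, sub_apply, smul_apply, one_apply, map_apply, smul_eq_mul]
  split_ifs <;> compute_degree

theorem charMat_map_coeff_one (A : Matrix (Fin n) (Fin n) R) :
    A.charMat.map (fun p : R[X] => p.coeff 1) = 1 := by
  ext i j
  simp only [charMat, sub_apply, smul_apply, one_apply, map_apply, smul_eq_mul, mul_ite]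
  split_ifs <;> simp

end Matrix

open Polynomial in
/-- The symmetric characteristic polynomial `p(x) = s-det(x·I - A)` of an `n × n` matrix `A`
(`n ≥ 1`) over a ring `R` with `1` has degree at most `n` and leading coefficient
`λ_n = n!`. -/
theorem sCharPoly_degree_le_and_coeff_n
    {n : ℕ} (hn : 1 ≤ n) {R : Type*} [Ring R] (A : Matrix (Fin n) (Fin n) R) :
    A.sCharPoly.degree ≤ n ∧ A.sCharPoly.coeff n = (n.factorial : R) := by
  unfold Matrix.sCharPoly
  have hA := A.natDegree_charMat_apply_le
  refine ⟨degree_le_of_natDegree_le ?_, ?_⟩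
  · simpa using Matrix.natDegree_sdet_le hA
  · simpa [A.charMat_map_coeff_one, Matrix.sdet_one hn] using Matrix.coeff_sdet hA
end

section
/- Let R be a ring with 1 and A an n×n matrix over R with symmetric characteristic polynomial p(x) = s-det(xI − A). Write n·(xI − A)(xI − A)* = p(x)·I + C_0 + C_1 x + ⋯ + C_n x^n with uniquely determined matrices C_0,…,C_n over R (so C_k is the coefficient matrix of x^k in n·(xI − A)(xI − A)* − p(x)·I). Then every entry of every C_k, 0 ≤ k ≤ n, lies in the additive subgroup [R,R] of R generated by all commutators [r,s] = rs − sr. -/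
/-!
Let `φ : S →+ G` be a trace, `φ (a * b) = φ (b * a)`; the projection `R → R ⧸ [R, R]` composed
with any coefficient map of `R[X]` is one. The `(i, j)` entry of `M * M.preadjoint` is a signed
sum, over `ρ`, of products of the `n` entries `M t (ρ t)` (the one at `t = j` replaced by
`M i (ρ j)`) taken in all orders that start at position `j`. A trace does not see cyclic
rotations of a product, so `n` times this sum becomes, under `φ`, the sum over all orders. For
`i ≠ j` the terms of `ρ` and `ρ * swap i j` then cancel; for `i = j`, summing the same expression
over all starting positions gives `φ (tr (M * M.preadjoint)) = φ M.sdet`.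
-/

open Finset Function

theorem List.ofFn_succAbove {n : ℕ} (j : Fin (n + 1)) :
    List.ofFn j.succAbove = (List.finRange (n + 1)).filter (· ≠ j) := by
  refine (Fin.strictMono_succAbove j).sortedLT_ofFn.pairwise.eq_of_mem_iff
    ((List.sortedLT_finRange _).pairwise.filter _) fun a => ?_
  simp [List.mem_ofFn']

theorem List.ofFn_comp_cycleRange_symm {α : Type*} {n : ℕ} (f : Fin (n + 1) → α)
    (j : Fin (n + 1)) :
    List.ofFn (f ∘ j.cycleRange.symm) = f j :: ((List.finRange (n + 1)).filter (· ≠ j)).map f := by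
  rw [List.ofFn_succ, ← List.ofFn_succAbove, List.map_ofFn]
  simp [Fin.cycleRange_symm_succ, Function.comp_def]

theorem List.ofFn_comp_mul_addRight {α : Type*} {n : ℕ} [NeZero n] (f : Fin n → α)
    (σ : Equiv.Perm (Fin n)) (c : Fin n) :
    List.ofFn (f ∘ ⇑(σ * Equiv.addRight c)) = (List.ofFn (f ∘ σ)).rotate c := by
  refine List.ext_getElem (by simp) fun k _ _ => ?_
  simp [List.getElem_rotate, Fin.add_def]

theorem map_list_prod_rotate {S G : Type*} [Monoid S] (φ : S → G)
    (hφ : ∀ a b, φ (a * b) = φ (b * a)) (l : List S) (k : ℕ) :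
    φ (l.rotate k).prod = φ l.prod := by
  rw [List.rotate_eq_drop_append_take_mod, List.prod_append, hφ, ← List.prod_append,
    List.take_append_drop]

namespace Equiv.Perm

theorem sum_mul_prod_filter_ne_eq_sum_prod_ofFn {S : Type*} [Semiring S] {n : ℕ}
    (f : Fin (n + 1) → S) (j : Fin (n + 1)) :
    ∑ τ : Perm (Fin (n + 1)) with τ j = j,
        f j * (((List.finRange (n + 1)).filter (· ≠ j)).map (f ∘ τ)).prod =
      ∑ σ : Perm (Fin (n + 1)) with σ 0 = j, (List.ofFn (f ∘ σ)).prod := by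
  refine sum_equiv (Equiv.mulRight j.cycleRange.symm) (fun τ => ?_) fun τ hτ => ?_
  · simp [Fin.cycleRange_symm_zero]
  · rw [mem_filter] at hτ
    rw [coe_mulRight, coe_mul, ← Function.comp_assoc, List.ofFn_comp_cycleRange_symm,
      List.prod_cons, Function.comp_apply, hτ.2]

theorem sum_eq_nsmul_sum_filter_apply_zero {G : Type*} [AddCommMonoid G] {n : ℕ} [NeZero n]
    (g : Perm (Fin n) → G) (hg : ∀ σ c, g (σ * Equiv.addRight c) = g σ) (j : Fin n) :
    ∑ σ, g σ = n • ∑ σ with σ 0 = j, g σ := by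
  have fiber (c : Fin n) : ∑ σ with σ⁻¹ j = c, g σ = ∑ σ with σ 0 = j, g σ := by
    rw [sum_filter, sum_filter]
    refine Fintype.sum_equiv (Equiv.mulRight (Equiv.addRight c)) _ _ fun σ => ?_
    simp [Equiv.symm_apply_eq, @eq_comm _ j, hg]
  rw [← sum_fiberwise univ (fun σ => σ⁻¹ j), Fintype.sum_congr _ _ fiber, sum_const, card_univ,
    Fintype.card_fin]

theorem sum_sign_smul_eq_zero {G : Type*} [AddCommGroup G] {n : ℕ} (g : Perm (Fin n) → G)
    {i j : Fin n} (hij : i ≠ j) (hg : ∀ ρ, g (ρ * swap i j) = g ρ) :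
    ∑ ρ, (sign ρ : ℤ) • g ρ = 0 := by
  refine sum_ninvolution (· * swap i j) (fun ρ => ?_) (fun ρ _ => ?_) (fun _ => mem_univ _)
    (fun ρ => by simp [mul_assoc])
  · simp [hg, sign_swap hij]
  · simpa [swap_eq_one_iff] using hij

end Equiv.Perm

namespace Matrix

variable {S G : Type*} [Ring S] [AddCommGroup G]

theorem map_trace_mul_comm {m : Type*} [Fintype m] (φ : S →+ G)
    (hφ : ∀ a b, φ (a * b) = φ (b * a)) (A B : Matrix m m S) :
    φ (trace (A * B)) = φ (trace (B * A)) := by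
  simp only [trace, diag, mul_apply, map_sum, hφ (A _ _)]
  exact sum_comm

theorem mul_preadjoint_apply_eq_sum_filter_fixing {n : ℕ} (M : Matrix (Fin n) (Fin n) S)
    (i j : Fin n) :
    (M * M.preadjoint) i j = ∑ ρ : Equiv.Perm (Fin n), (Equiv.Perm.sign ρ : ℤ) •
      ∑ τ : Equiv.Perm (Fin n) with τ j = j,
        M i (ρ j) * (((List.finRange n).filter (· ≠ j)).map fun k => M (τ k) (ρ (τ k))).prod := by
  simp only [mul_apply, preadjoint, mul_sum, smul_sum, sum_filter, mul_ite, mul_zero,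
    mul_smul_comm, ite_and]
  rw [sum_comm]
  simp_rw [sum_comm (γ := Fin n)]
  rw [sum_comm]
  refine sum_congr rfl fun ρ _ => sum_congr rfl fun τ _ => ?_
  split_ifs <;> simp

theorem mul_preadjoint_apply_eq_sum_prod_ofFn {n : ℕ} (M : Matrix (Fin (n + 1)) (Fin (n + 1)) S)
    (i j : Fin (n + 1)) :
    (M * M.preadjoint) i j = ∑ ρ : Equiv.Perm (Fin (n + 1)), (Equiv.Perm.sign ρ : ℤ) •
      ∑ σ : Equiv.Perm (Fin (n + 1)) with σ 0 = j,
        (List.ofFn (update (fun t => M t (ρ t)) j (M i (ρ j)) ∘ σ)).prod := by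
  rw [mul_preadjoint_apply_eq_sum_filter_fixing]
  refine sum_congr rfl fun ρ _ => ?_
  rw [← Equiv.Perm.sum_mul_prod_filter_ne_eq_sum_prod_ofFn, update_self]
  refine congrArg _ (sum_congr rfl fun τ hτ => ?_)
  refine congrArg (_ * List.prod ·) (List.map_congr_left fun k hk => ?_)
  have hkj : k ≠ j := by simpa using List.of_mem_filter hk
  have hτk : τ k ≠ j := fun h => hkj (τ.injective (h.trans (mem_filter.mp hτ).2.symm))
  simp [update_of_ne hτk]

theorem nsmul_map_mul_preadjoint_apply_eq_sum {n : ℕ} (φ : S →+ G)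
    (hφ : ∀ a b, φ (a * b) = φ (b * a)) (M : Matrix (Fin (n + 1)) (Fin (n + 1)) S)
    (i j : Fin (n + 1)) :
    (n + 1) • φ ((M * M.preadjoint) i j) = ∑ ρ : Equiv.Perm (Fin (n + 1)),
      (Equiv.Perm.sign ρ : ℤ) • ∑ σ : Equiv.Perm (Fin (n + 1)),
        φ (List.ofFn (update (fun t => M t (ρ t)) j (M i (ρ j)) ∘ σ)).prod := by
  rw [mul_preadjoint_apply_eq_sum_prod_ofFn, map_sum, smul_sum]
  refine sum_congr rfl fun ρ _ => ?_
  rw [map_zsmul, smul_comm, map_sum,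
    Equiv.Perm.sum_eq_nsmul_sum_filter_apply_zero _ (fun σ c => ?_) j]
  rw [List.ofFn_comp_mul_addRight, map_list_prod_rotate φ hφ]

theorem nsmul_map_mul_preadjoint_apply (φ : S →+ G) (hφ : ∀ a b, φ (a * b) = φ (b * a))
    {n : ℕ} (M : Matrix (Fin n) (Fin n) S) (i j : Fin n) :
    n • φ ((M * M.preadjoint) i j) = if i = j then φ M.sdet else 0 := by
  obtain ⟨n, rfl⟩ : ∃ m, n = m + 1 := Nat.exists_eq_add_one.mpr i.pos
  rw [nsmul_map_mul_preadjoint_apply_eq_sum φ hφ]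
  split_ifs with hij
  · subst hij
    have hsdet : φ M.sdet = ∑ j, ∑ ρ : Equiv.Perm (Fin (n + 1)), (Equiv.Perm.sign ρ : ℤ) •
        ∑ σ : Equiv.Perm (Fin (n + 1)) with σ 0 = j,
          φ (List.ofFn ((fun t => M t (ρ t)) ∘ σ)).prod := by
      rw [sdet, map_trace_mul_comm φ hφ, trace, map_sum]
      refine sum_congr rfl fun j _ => ?_
      rw [diag_apply, mul_preadjoint_apply_eq_sum_prod_ofFn, map_sum]
      simp only [map_zsmul, map_sum, update_eq_self]
    rw [hsdet, sum_comm]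
    refine sum_congr rfl fun ρ _ => ?_
    rw [← smul_sum, sum_fiberwise, update_eq_self]
  · refine Equiv.Perm.sum_sign_smul_eq_zero _ hij fun ρ => ?_
    have hswap : update (fun t => M t ((ρ * Equiv.swap i j) t)) j (M i ((ρ * Equiv.swap i j) j)) =
        update (fun t => M t (ρ t)) j (M i (ρ j)) ∘ Equiv.swap i j := by
      ext t
      rcases eq_or_ne t i with rfl | hti
      · simp [hij]
      rcases eq_or_ne t j with rfl | htj
      · simp [hij]
      · simp [hti, htj, Equiv.swap_apply_of_ne_of_ne]
    rw [hswap]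
    exact Fintype.sum_equiv (Equiv.mulLeft (Equiv.swap i j)) _ _ fun σ => rfl

end Matrix

open Polynomial in
theorem Polynomial.map_coeff_mul_comm {R G : Type*} [Ring R] [AddCommGroup G] (φ : R →+ G)
    (hφ : ∀ a b, φ (a * b) = φ (b * a)) (p q : R[X]) (k : ℕ) :
    φ ((p * q).coeff k) = φ ((q * p).coeff k) := by
  rw [coeff_mul, coeff_mul, ← Nat.sum_antidiagonal_swap, map_sum, map_sum]
  simp [hφ]

open Polynomial in
/-- Theorem 2.2 (first part): write
`n·(xI - A)(xI - A)* = p(x)·I + C₀ + C₁x + ⋯ + Cₙxⁿ`,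
where `p(x)` is the symmetric characteristic polynomial of `A`; then each entry of each
coefficient matrix `C_k` (`0 ≤ k ≤ n`) lies in the additive subgroup `[R,R]` of `R`
generated by all commutators `rs - sr`. -/
theorem coeff_charMat_mul_preadjoint_mem_commutatorSubgroup
    {n : ℕ} {R : Type*} [Ring R] (A : Matrix (Fin n) (Fin n) R)
    (C : ℕ → Matrix (Fin n) (Fin n) R)
    (hC : ∀ k, ∀ i j : Fin n,
      C k i j = ((n • (A.charMat * A.charMat.preadjoint)
        - A.sCharPoly • (1 : Matrix (Fin n) (Fin n) R[X])) i j).coeff k) :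
    ∀ k ≤ n, ∀ i j : Fin n,
      C k i j ∈ AddSubgroup.closure {z : R | ∃ r s : R, z = r * s - s * r} := by
  intro k _ i j
  set K := AddSubgroup.closure {z : R | ∃ r s : R, z = r * s - s * r}
  have hπ (a b : R) : QuotientAddGroup.mk' K (a * b) = QuotientAddGroup.mk' K (b * a) :=
    QuotientAddGroup.eq_iff_sub_mem.mpr (AddSubgroup.subset_closure ⟨a, b, rfl⟩)
  let ψ : R[X] →+ R ⧸ K := (QuotientAddGroup.mk' K).comp (lcoeff R k).toAddMonoidHom
  have hψ (p q : R[X]) : ψ (p * q) = ψ (q * p) := map_coeff_mul_comm _ hπ p q k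
  rw [← QuotientAddGroup.eq_zero_iff, hC]
  change ψ ((n • (A.charMat * A.charMat.preadjoint) - A.sCharPoly • 1) i j) = 0
  rw [Matrix.sub_apply, map_sub, Matrix.smul_apply, map_nsmul,
    A.charMat.nsmul_map_mul_preadjoint_apply ψ hψ, Matrix.smul_apply, Matrix.one_apply,
    Matrix.sCharPoly]
  split_ifs <;> simp
end

section
/- Let R be a ring with 1 and A an n×n matrix over R with symmetric characteristic polynomial p(x) = s-det(xI − A). Write n·(xI − A)*(xI − A) = p(x)·I + D_0 + D_1 x + ⋯ + D_n x^n with uniquely determined matrices D_0,…,D_n over R (so D_k is the coefficient matrix of x^k in n·(xI − A)*(xI − A) − p(x)·I). Then every entry of every D_k, 0 ≤ k ≤ n, lies in the additive subgroup [R,R] of R generated by all commutators [r,s] = rs − sr. -/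
/-! Modulo `[R, R]` a product of ring elements only depends on its factors up to cyclic
rotation. For a matrix `B` over `R`, each term of `(B* B) r j` is a product of entries
`B (σ 0) (g (σ 0)) ⋯ B (σ n) (g (σ n))` read along an ordering `σ` that ends at `s = ρ⁻¹ r`,
where `g` agrees with `ρ` except that `g s = j`. Every ordering is a rotation of exactly one
ordering ending at `s`, so modulo `[R, R]` the factor `n` turns the sum over orderings ending
at `s` into the sum over all orderings. For `r ≠ j` the resulting signed sum over `ρ` cancels in
pairs `ρ, swap r j * ρ`, which give the same `g`; for `r = j` it is the class of
`tr (B* B) = s-det B`. Applied to `B = xI - A`, it remains to note that the coefficients of an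
element of `[R[x], R[x]]` lie in `[R, R]`. -/

open Finset Equiv Equiv.Perm

def commutatorSubgroup (S : Type*) [Ring S] : AddSubgroup S :=
  AddSubgroup.closure {z | ∃ r s : S, z = r * s - s * r}

namespace commutatorSubgroup

variable {S : Type*} [Ring S]

theorem mk_mul_comm (a b : S) :
    ((a * b : S) : S ⧸ commutatorSubgroup S) = ((b * a : S) : S ⧸ commutatorSubgroup S) :=
  (QuotientAddGroup.eq_iff_sub_mem ..).mpr (AddSubgroup.subset_closure ⟨a, b, rfl⟩)

theorem mk_list_prod_rotate (l : List S) (k : ℕ) :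
    ((l.rotate k).prod : S ⧸ commutatorSubgroup S) = (l.prod : S ⧸ commutatorSubgroup S) := by
  conv_rhs => rw [← List.take_append_drop (k % l.length) l]
  rw [List.rotate_eq_drop_append_take_mod, List.prod_append, List.prod_append, mk_mul_comm]

open Polynomial in
theorem coeff_mem {f : S[X]} (hf : f ∈ commutatorSubgroup S[X]) (k : ℕ) :
    f.coeff k ∈ commutatorSubgroup S := by
  induction hf using AddSubgroup.closure_induction with
  | mem x hx =>
    obtain ⟨a, b, rfl⟩ := hx
    rw [coeff_sub, coeff_mul, coeff_mul, ← Nat.sum_antidiagonal_swap, ← sum_sub_distrib]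
    exact sum_mem fun x _ => AddSubgroup.subset_closure ⟨a.coeff x.2, b.coeff x.1, rfl⟩
  | zero => simp
  | add x y _ _ hx hy => simpa using add_mem hx hy
  | neg x _ hx => simpa using neg_mem hx

end commutatorSubgroup

namespace Equiv.Perm

variable {α M : Type*} [DecidableEq α]

theorem update_swap_mul_inv_apply (ρ : Perm α) (r j : α) :
    Function.update (swap r j * ρ) ((swap r j * ρ)⁻¹ r) j = Function.update ρ (ρ⁻¹ r) j := by
  ext x
  simp only [Function.update_apply, mul_inv_rev, swap_inv, Perm.mul_apply, swap_apply_left]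
  by_cases hj : x = ρ⁻¹ j
  · simp [hj]
  by_cases hr : x = ρ⁻¹ r
  · simp [hr]
  rw [if_neg hj, if_neg hr, swap_apply_of_ne_of_ne] <;> grind [Perm.eq_inv_iff_eq]

theorem update_inv_apply_self (ρ : Perm α) (r : α) : Function.update ρ (ρ⁻¹ r) r = ρ := by
  simp

variable [Fintype α]

theorem sum_fixing_mul_eq_sum_apply_eq [AddCommMonoid M] {π : Perm α} {a b : α} (h : π a = b)
    (f : Perm α → M) : ∑ τ with τ b = b, f (τ * π) = ∑ σ with σ a = b, f σ :=
  sum_equiv (Equiv.mulRight π) (by simp [h]) (by simp)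

theorem sum_perm_eq_card_smul_sum_apply_eq [AddCommMonoid M] (W : Perm α → M) (a b : α)
    (hW : ∀ x, ∃ c : Perm α, c a = x ∧ ∀ σ, W (σ * c) = W σ) :
    ∑ σ, W σ = Fintype.card α • ∑ σ with σ a = b, W σ := by
  rw [← sum_fiberwise univ (fun σ : Perm α => σ⁻¹ b), ← card_univ, ← sum_const]
  refine sum_congr rfl fun x _ => ?_
  obtain ⟨c, hca, hc⟩ := hW x
  refine (sum_equiv (Equiv.mulRight c⁻¹) (fun σ => ?_) (fun σ _ => ?_)).symm
  · simp only [mem_filter, mem_univ, true_and, coe_mulRight]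
    rw [mul_inv_rev, inv_inv, Perm.mul_apply, ← hca, c.injective.eq_iff, Perm.inv_eq_iff_eq,
      eq_comm]
  · simpa using hc (σ * c⁻¹)

theorem sum_sign_smul_eq_zero_of_swap_mul [AddCommGroup M] (H : Perm α → M) {r j : α}
    (hrj : r ≠ j) (hH : ∀ ρ, H (swap r j * ρ) = H ρ) :
    ∑ ρ, (sign ρ : ℤ) • H ρ = 0 := by
  refine sum_involution (fun ρ _ => swap r j * ρ) (fun ρ _ => ?_) (fun ρ _ _ => ?_)
    (fun _ _ => mem_univ _) (fun ρ _ => by rw [← mul_assoc, swap_mul_self, one_mul])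
  · simp [hH, Perm.sign_mul, sign_swap hrj]
  · simpa [swap_eq_one_iff] using hrj

end Equiv.Perm

theorem List.ofFn_add_eq_rotate {α : Type*} {m : ℕ} (f : Fin (m + 1) → α) (k : Fin (m + 1)) :
    List.ofFn (fun i => f (i + k)) = (List.ofFn f).rotate k := by
  refine List.ext_getElem (by simp) fun i h₁ h₂ => ?_
  simp only [List.getElem_rotate, List.getElem_ofFn, List.length_ofFn]
  exact congrArg f (Fin.ext (Fin.val_add _ _))

theorem List.finRange_filter_ne_eq_ofFn_succAbove {m : ℕ} (s : Fin (m + 1)) :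
    (List.finRange (m + 1)).filter (fun k => k ≠ s) = List.ofFn s.succAbove :=
  ((List.pairwise_lt_finRange _).filter _).eq_of_mem_iff
    (List.pairwise_ofFn.mpr fun _ _ h => Fin.strictMono_succAbove s h)
    (fun k => by simp [List.mem_ofFn, Fin.exists_succAbove_eq_iff])

namespace Matrix

variable {S : Type*} [Ring S] {m : ℕ}

def orderedProd {n : ℕ} (B : Matrix (Fin n) (Fin n) S) (g : Fin n → Fin n) (σ : Perm (Fin n)) :
    S :=
  (List.ofFn fun i => B (σ i) (g (σ i))).prod

-- `Fin.cycleIcc s (Fin.last m)` lists `0, …, s - 1, s + 1, …, m, s`.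
theorem prod_filter_ne_mul_eq_orderedProd (B : Matrix (Fin (m + 1)) (Fin (m + 1)) S)
    {s : Fin (m + 1)} {τ : Perm (Fin (m + 1))} (hτ : τ s = s) (ρ : Perm (Fin (m + 1)))
    (j : Fin (m + 1)) :
    (((List.finRange (m + 1)).filter (fun k => k ≠ s)).map (fun k => B (τ k) (ρ (τ k)))).prod *
        B s j =
      orderedProd B (Function.update ρ s j) (τ * Fin.cycleIcc s (Fin.last m)) := by
  have hlast : (τ * Fin.cycleIcc s (Fin.last m)) (Fin.last m) = s := by
    rw [Perm.mul_apply, Fin.cycleIcc_of_last (Fin.le_last s), hτ]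
  rw [orderedProd, List.ofFn_succ', List.concat_eq_append, List.prod_append, List.prod_singleton,
    List.finRange_filter_ne_eq_ofFn_succAbove, List.map_ofFn, hlast, Function.update_self]
  congr 3 with i
  have hi : Fin.cycleIcc s (Fin.last m) i.castSucc = s.succAbove i := by
    rw [← Fin.succAbove_last, ← Function.comp_apply (f := Fin.cycleIcc s (Fin.last m)),
      Fin.cycleIcc_comp_succAbove s _ (Fin.le_last s)]
  have hne : τ (s.succAbove i) ≠ s := fun h =>
    Fin.succAbove_ne s i (τ.injective (h.trans hτ.symm))
  simp [hi, hne]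

theorem preadjoint_mul_apply (B : Matrix (Fin (m + 1)) (Fin (m + 1)) S) (r j : Fin (m + 1)) :
    (B.preadjoint * B) r j = ∑ ρ : Perm (Fin (m + 1)), (sign ρ : ℤ) •
      ∑ σ with σ (Fin.last m) = ρ⁻¹ r, orderedProd B (Function.update ρ (ρ⁻¹ r) j) σ := by
  have hs : ∀ s, B.preadjoint r s * B s j = ∑ ρ : Perm (Fin (m + 1)), if ρ s = r then
      (sign ρ : ℤ) • ∑ σ with σ (Fin.last m) = s, orderedProd B (Function.update ρ s j) σ
      else 0 := by
    intro s
    simp only [preadjoint, sum_mul, ite_mul, zero_mul, smul_mul_assoc]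
    rw [sum_comm]
    refine sum_congr rfl fun ρ _ => ?_
    rw [← sum_fixing_mul_eq_sum_apply_eq (Fin.cycleIcc_of_last (Fin.le_last s)), smul_sum,
      sum_filter]
    split_ifs with hρ
    · refine sum_congr rfl fun τ _ => ?_
      by_cases hτ : τ s = s
      · rw [if_pos ⟨hτ, hρ⟩, if_pos hτ, prod_filter_ne_mul_eq_orderedProd B hτ]
      · simp [hτ]
    · simp [hρ]
  simp only [mul_apply, hs, Perm.eq_inv_iff_eq.symm]
  rw [sum_comm]
  simp

theorem orderedProd_mul_finCycle (B : Matrix (Fin (m + 1)) (Fin (m + 1)) S)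
    (g : Fin (m + 1) → Fin (m + 1)) (σ : Perm (Fin (m + 1))) (k : Fin (m + 1)) :
    orderedProd B g (σ * finCycle k) = ((List.ofFn fun i => B (σ i) (g (σ i))).rotate k).prod := by
  rw [orderedProd, ← List.ofFn_add_eq_rotate]
  rfl

theorem card_smul_sum_mk_orderedProd_apply_last_eq (B : Matrix (Fin (m + 1)) (Fin (m + 1)) S)
    (g : Fin (m + 1) → Fin (m + 1)) (s : Fin (m + 1)) :
    (m + 1) • ∑ σ with σ (Fin.last m) = s, (↑(orderedProd B g σ) : S ⧸ commutatorSubgroup S) =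
      ∑ σ, (↑(orderedProd B g σ) : S ⧸ commutatorSubgroup S) := by
  rw [sum_perm_eq_card_smul_sum_apply_eq _ (Fin.last m) s, Fintype.card_fin]
  refine fun x => ⟨finCycle (x - Fin.last m), by simp, fun σ => ?_⟩
  rw [orderedProd_mul_finCycle, commutatorSubgroup.mk_list_prod_rotate, orderedProd]

theorem card_smul_mk_preadjoint_mul_apply (B : Matrix (Fin (m + 1)) (Fin (m + 1)) S)
    (r j : Fin (m + 1)) :
    (m + 1) • (↑((B.preadjoint * B) r j) : S ⧸ commutatorSubgroup S) =
      ∑ ρ : Perm (Fin (m + 1)), (sign ρ : ℤ) •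
        ∑ σ, (↑(orderedProd B (Function.update ρ (ρ⁻¹ r) j) σ) : S ⧸ commutatorSubgroup S) := by
  simp only [preadjoint_mul_apply, QuotientAddGroup.mk_sum, QuotientAddGroup.mk_zsmul]
  rw [smul_sum]
  refine sum_congr rfl fun ρ _ => ?_
  rw [smul_comm, card_smul_sum_mk_orderedProd_apply_last_eq]

theorem mk_trace_preadjoint_mul (B : Matrix (Fin (m + 1)) (Fin (m + 1)) S) :
    (↑(trace (B.preadjoint * B)) : S ⧸ commutatorSubgroup S) =
      ∑ ρ : Perm (Fin (m + 1)), (sign ρ : ℤ) •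
        ∑ σ, (↑(orderedProd B ρ σ) : S ⧸ commutatorSubgroup S) := by
  simp only [trace, diag, preadjoint_mul_apply, update_inv_apply_self, QuotientAddGroup.mk_sum,
    QuotientAddGroup.mk_zsmul]
  rw [sum_comm]
  refine sum_congr rfl fun ρ _ => ?_
  rw [← smul_sum, ← sum_fiberwise univ (fun σ : Perm (Fin (m + 1)) => σ (Fin.last m))]
  exact congrArg _ (Fintype.sum_equiv ρ⁻¹ _ _ fun _ => rfl)

theorem nsmul_preadjoint_mul_sub_sdet_smul_one_apply_mem {n : ℕ} (B : Matrix (Fin n) (Fin n) S)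
    (i j : Fin n) :
    (n • (B.preadjoint * B) - B.sdet • (1 : Matrix (Fin n) (Fin n) S)) i j ∈
      commutatorSubgroup S := by
  cases n with
  | zero => exact i.elim0
  | succ m =>
    rw [← QuotientAddGroup.eq_zero_iff, sub_apply, smul_apply, smul_apply, one_apply,
      QuotientAddGroup.mk_sub, QuotientAddGroup.mk_nsmul, card_smul_mk_preadjoint_mul_apply,
      sub_eq_zero]
    by_cases hij : i = j
    · subst hij
      rw [if_pos rfl, smul_eq_mul, mul_one, sdet, mk_trace_preadjoint_mul]
      simp only [update_inv_apply_self]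
    · rw [if_neg hij, smul_zero, QuotientAddGroup.mk_zero]
      exact sum_sign_smul_eq_zero_of_swap_mul _ hij fun ρ => by rw [update_swap_mul_inv_apply]

end Matrix

open Polynomial in
/-- Theorem 2.2 (first part, left version): write
`n·(xI - A)*(xI - A) = p(x)·I + D₀ + D₁x + ⋯ + Dₙxⁿ`,
where `p(x)` is the symmetric characteristic polynomial of `A`; then each entry of each
coefficient matrix `D_k` (`0 ≤ k ≤ n`) lies in the additive subgroup `[R,R]` of `R`
generated by all commutators `rs - sr`. -/
theorem coeff_preadjoint_mul_charMat_mem_commutatorSubgroup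
    {n : ℕ} {R : Type*} [Ring R] (A : Matrix (Fin n) (Fin n) R)
    (D : ℕ → Matrix (Fin n) (Fin n) R)
    (hD : ∀ k, ∀ i j : Fin n,
      D k i j = ((n • (A.charMat.preadjoint * A.charMat)
        - A.sCharPoly • (1 : Matrix (Fin n) (Fin n) R[X])) i j).coeff k) :
    ∀ k ≤ n, ∀ i j : Fin n,
      D k i j ∈ AddSubgroup.closure {z : R | ∃ r s : R, z = r * s - s * r} := by
  intro k _ i j
  rw [hD]
  exact commutatorSubgroup.coeff_mem
    (Matrix.nsmul_preadjoint_mul_sub_sdet_smul_one_apply_mem A.charMat i j) k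
end

section
/- Let R be a ring with 1 with centre Z(R), let A be an n×n matrix over R, and let U be an invertible n×n matrix all of whose entries lie in Z(R) (with inverse U⁻¹ also having entries in Z(R)). Then the symmetric characteristic polynomial of UAU⁻¹ equals the symmetric characteristic polynomial of A; in particular, all coefficients λ_0, …, λ_n of the symmetric characteristic polynomial are invariant under the conjugate action of GL_n(Z(R)) on M_n(R). -/
/-!
For `n ≥ 1`, `s-det A` is the two-sided alternating sum
`∑_{π,σ} sgn π · sgn σ · a_{π 0, σ 0} ⋯ a_{π (n-1), σ (n-1)}` (`doubleDet`): in `tr(A* A)` the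
factor `a_{s,r}` is appended to the product of `a*_{r,s}`, which skips position `s`, and composing
`τ` with the cycle `(s s+1 … n-1)` turns the sum over `s` and over the `τ` fixing `s` into a sum
over all permutations. Each factor of the ordered product is linear in its row and in its column
index and the signs alternate both, so matrices over the commutative ring `Z(R)` come out on
either side as determinants: `doubleDet (U B V) = det U · det V · doubleDet B`. Since `X` is
central in `R[X]`, `x·I - U A U⁻¹ = U (x·I - A) U⁻¹`, and `det U · det U⁻¹ = 1`.
-/

open Equiv Equiv.Perm

theorem List.prod_ofFn_sum_smul {A S ι : Type*} [Semiring A] [CommSemiring S] [Algebra S A]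
    [Fintype ι] {n : ℕ} (c : Fin n → ι → S) (b : Fin n → ι → A) :
    (List.ofFn fun k => ∑ i, c k i • b k i).prod
      = ∑ a : Fin n → ι, (∏ k, c k (a k)) • (List.ofFn fun k => b k (a k)).prod := by
  simp only [← MultilinearMap.mkPiAlgebraFin_apply (R := S), MultilinearMap.map_sum,
    MultilinearMap.map_smul_univ]

section

variable {R S : Type*} [Ring R] [CommRing S] [Algebra S R] {n : ℕ}

theorem List.Perm.exists_map_finRange_eq {l : List (Fin n)} (h : l.Perm (List.finRange n)) :
    ∃ e : Equiv.Perm (Fin n), (List.finRange n).map e = l := by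
  have hlen : l.length = n := h.length_eq.trans List.length_finRange
  have hnd : l.Nodup := h.nodup_iff.2 (List.nodup_finRange n)
  refine ⟨(finCongr hlen.symm).trans
    (hnd.getEquivOfForallMemList l fun x => h.mem_iff.2 (List.mem_finRange x)), ?_⟩
  refine List.ext_getElem (by simp [hlen]) fun i _ _ => ?_
  simp [List.Nodup.getEquivOfForallMemList_apply]

theorem List.filter_ne_append_singleton_perm_finRange (r : Fin n) :
    ((List.finRange n).filter (fun k => k ≠ r) ++ [r]).Perm (List.finRange n) := by
  have herase : (List.finRange n).filter (fun k => k ≠ r) = (List.finRange n).erase r := by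
    -- `x != r` on `Fin` agrees with `!decide (x = r)` only after unfolding its `BEq` instance
    simp [(List.nodup_finRange n).erase_eq_filter]; rfl
  rw [herase]
  exact (List.perm_append_singleton _ _).trans (List.perm_cons_erase (List.mem_finRange r)).symm

namespace Fin

theorem exists_perm_map_finRange_eq_filter_ne_append {m : ℕ} (r : Fin (m + 1)) :
    ∃ c : Perm (Fin (m + 1)), (List.finRange (m + 1)).map c
      = (List.finRange (m + 1)).filter (fun k => k ≠ r) ++ [r] ∧ c (Fin.last m) = r := by
  obtain ⟨c, hc⟩ := (List.filter_ne_append_singleton_perm_finRange r).exists_map_finRange_eq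
  refine ⟨c, hc, ?_⟩
  simpa [List.finRange_succ_last] using congrArg List.getLast? hc

theorem sum_sum_ite_filter_ne_append_eq_sum {M : Type*} [AddCommMonoid M] {m : ℕ}
    (F : List (Fin (m + 1)) → M) :
    ∑ r : Fin (m + 1), ∑ τ : Perm (Fin (m + 1)),
      (if τ r = r then F (((List.finRange (m + 1)).filter (fun k => k ≠ r) ++ [r]).map τ) else 0)
      = ∑ π : Perm (Fin (m + 1)), F ((List.finRange (m + 1)).map π) := by
  have hr (r : Fin (m + 1)) : ∑ τ : Perm (Fin (m + 1)),
      (if τ r = r then F (((List.finRange (m + 1)).filter (fun k => k ≠ r) ++ [r]).map τ) else 0)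
      = ∑ π : Perm (Fin (m + 1)),
          if π (Fin.last m) = r then F ((List.finRange (m + 1)).map π) else 0 := by
    obtain ⟨c, hc, hlast⟩ := exists_perm_map_finRange_eq_filter_ne_append r
    refine Fintype.sum_equiv (Equiv.mulRight c) _ _ fun τ => ?_
    rw [Equiv.coe_mulRight, Perm.mul_apply, hlast, Perm.coe_mul, ← List.map_map, hc]
  simp only [hr]
  rw [Finset.sum_comm]
  simp

end Fin

namespace Matrix

theorem sum_sign_smul_sum_prod_smul_eq_det_smul {M : Type*} [AddCommGroup M] [Module S M]
    (U : Matrix (Fin n) (Fin n) S) (F : (Fin n → Fin n) → M) :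
    ∑ π : Perm (Fin n), sign π • ∑ a : Fin n → Fin n, (∏ k, U (π k) (a k)) • F a
      = U.det • ∑ φ : Perm (Fin n), sign φ • F φ := by
  have hdet (a : Fin n → Fin n) :
      ∑ π : Perm (Fin n), sign π • ∏ k, U (π k) (a k) = (U.submatrix id a).det := by
    simp [det_apply]
  calc ∑ π : Perm (Fin n), sign π • ∑ a : Fin n → Fin n, (∏ k, U (π k) (a k)) • F a
      = ∑ a : Fin n → Fin n, (U.submatrix id a).det • F a := by
        simp only [Finset.smul_sum, ← hdet, Finset.sum_smul, smul_assoc]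
        exact Finset.sum_comm
    _ = ∑ φ : Perm (Fin n), (U.submatrix id φ).det • F φ := by
        refine (Fintype.sum_of_injective _ DFunLike.coe_injective _ _ (fun a ha => ?_)
          fun _ => rfl).symm
        obtain ⟨i, j, hij, hne⟩ : ∃ i j, a i = a j ∧ i ≠ j := by
          by_contra! hinj
          exact ha ⟨Equiv.ofBijective a (Finite.injective_iff_bijective.mp hinj), rfl⟩
        rw [det_zero_of_column_eq hne fun k => by simp [hij], zero_smul]
    _ = U.det • ∑ φ : Perm (Fin n), sign φ • F φ := by
        simp only [det_permute', Finset.smul_sum, mul_comm, mul_smul, Units.smul_def,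
          Int.cast_smul_eq_zsmul]

-- Over a commutative ring this is `n! • det A`.
def doubleDet (A : Matrix (Fin n) (Fin n) R) : R :=
  ∑ π : Perm (Fin n), sign π • ∑ σ : Perm (Fin n), sign σ • (List.ofFn fun k => A (π k) (σ k)).prod

theorem doubleDet_eq_sum_sign_smul_sum (A : Matrix (Fin n) (Fin n) R) :
    A.doubleDet = ∑ σ : Perm (Fin n), sign σ • ∑ π : Perm (Fin n),
      sign π • (List.ofFn fun k => A (π k) (σ k)).prod := by
  simp only [doubleDet, Finset.smul_sum]
  rw [Finset.sum_comm]
  exact Finset.sum_congr rfl fun _ _ => Finset.sum_congr rfl fun _ _ => smul_comm _ _ _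

theorem doubleDet_eq_sum_sum_sign_smul (A : Matrix (Fin n) (Fin n) R) :
    A.doubleDet = ∑ π : Perm (Fin n), ∑ ρ : Perm (Fin n),
      sign ρ • (List.ofFn fun k => A (π k) (ρ (π k))).prod := by
  refine Finset.sum_congr rfl fun π _ => ?_
  rw [Finset.smul_sum]
  refine (Fintype.sum_equiv (Equiv.mulRight π) _ _ fun ρ => ?_).symm
  rw [Equiv.coe_mulRight, Perm.sign_mul, smul_smul, mul_comm (sign ρ), ← mul_assoc,
    Int.units_mul_self, one_mul]
  rfl

theorem sum_preadjoint_mul_apply (A : Matrix (Fin n) (Fin n) R) (s : Fin n) :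
    ∑ r, A.preadjoint r s * A s r = ∑ τ : Perm (Fin n), if τ s = s then
      ∑ ρ : Perm (Fin n), sign ρ •
        ((((List.finRange n).filter (fun k => k ≠ s) ++ [s]).map τ).map fun j => A j (ρ j)).prod
      else 0 := by
  simp only [preadjoint, Finset.sum_mul, ite_mul, zero_mul]
  rw [Finset.sum_comm]
  refine Finset.sum_congr rfl fun τ _ => ?_
  split_ifs with hτ
  · rw [Finset.sum_comm]
    refine Finset.sum_congr rfl fun ρ _ => ?_
    simp [hτ, List.map_map, Function.comp_def, Units.smul_def, mul_assoc]
  · simp [hτ]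

-- For `n = 0` the identity fails: `sdet` of the empty matrix is `0`, its `doubleDet` is `1`.
theorem sdet_eq_doubleDet {m : ℕ} (A : Matrix (Fin (m + 1)) (Fin (m + 1)) R) :
    A.sdet = A.doubleDet :=
  calc A.sdet = ∑ s, ∑ r, A.preadjoint r s * A s r := by
        rw [sdet, trace, Finset.sum_comm]
        simp [mul_apply]
    _ = ∑ π : Perm (Fin (m + 1)), ∑ ρ : Perm (Fin (m + 1)),
          sign ρ • (((List.finRange (m + 1)).map π).map fun j => A j (ρ j)).prod := by
        simp only [sum_preadjoint_mul_apply]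
        exact Fin.sum_sum_ite_filter_ne_append_eq_sum
          fun l => ∑ ρ : Perm (Fin (m + 1)), sign ρ • (l.map fun j => A j (ρ j)).prod
    _ = A.doubleDet := by
        simp only [doubleDet_eq_sum_sum_sign_smul, List.ofFn_eq_map, List.map_map,
          Function.comp_def]

theorem doubleDet_map_mul (U : Matrix (Fin n) (Fin n) S) (B : Matrix (Fin n) (Fin n) R) :
    (U.map (algebraMap S R) * B).doubleDet = U.det • B.doubleDet := by
  have hprod (g h : Fin n → Fin n) :
      (List.ofFn fun k => (U.map (algebraMap S R) * B) (g k) (h k)).prod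
        = ∑ a : Fin n → Fin n, (∏ k, U (g k) (a k)) • (List.ofFn fun k => B (a k) (h k)).prod := by
    simp only [mul_apply, map_apply, ← Algebra.smul_def, List.prod_ofFn_sum_smul]
  rw [doubleDet_eq_sum_sign_smul_sum, doubleDet_eq_sum_sign_smul_sum, Finset.smul_sum]
  refine Finset.sum_congr rfl fun σ _ => ?_
  simp only [hprod]
  rw [sum_sign_smul_sum_prod_smul_eq_det_smul U fun a => (List.ofFn fun k => B (a k) (σ k)).prod,
    smul_comm]

theorem doubleDet_mul_map (B : Matrix (Fin n) (Fin n) R) (V : Matrix (Fin n) (Fin n) S) :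
    (B * V.map (algebraMap S R)).doubleDet = V.det • B.doubleDet := by
  have hprod (g h : Fin n → Fin n) :
      (List.ofFn fun k => (B * V.map (algebraMap S R)) (g k) (h k)).prod
        = ∑ b : Fin n → Fin n, (∏ k, Vᵀ (h k) (b k)) • (List.ofFn fun k => B (g k) (b k)).prod := by
    simp only [mul_apply, map_apply, ← Algebra.commutes, ← Algebra.smul_def, transpose_apply,
      List.prod_ofFn_sum_smul]
  rw [doubleDet, doubleDet, Finset.smul_sum]
  refine Finset.sum_congr rfl fun π _ => ?_
  simp only [hprod]
  rw [sum_sign_smul_sum_prod_smul_eq_det_smul Vᵀ fun b => (List.ofFn fun k => B (π k) (b k)).prod,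
    det_transpose, smul_comm]

theorem doubleDet_conj {U V : Matrix (Fin n) (Fin n) S} (hUV : U * V = 1)
    (B : Matrix (Fin n) (Fin n) R) :
    (U.map (algebraMap S R) * B * V.map (algebraMap S R)).doubleDet = B.doubleDet := by
  rw [doubleDet_mul_map, doubleDet_map_mul, smul_smul, mul_comm, ← det_mul, hUV, det_one, one_smul]

open Polynomial in
theorem charMat_conj {U V : Matrix (Fin n) (Fin n) S} (hUV : U * V = 1)
    (A : Matrix (Fin n) (Fin n) R) :
    (U.map (algebraMap S R) * A * V.map (algebraMap S R)).charMat
      = U.map (algebraMap S R[X]) * A.charMat * V.map (algebraMap S R[X]) := by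
  have hC (W : Matrix (Fin n) (Fin n) S) :
      (W.map (algebraMap S R)).map C = W.map (algebraMap S R[X]) := by
    rw [Matrix.map_map]; rfl
  have hX : U.map (algebraMap S R[X]) * ((X : R[X]) • 1) * V.map (algebraMap S R[X])
      = (X : R[X]) • 1 := by
    rw [smul_one_eq_diagonal, ← scalar_apply, ← (scalar_commute X (fun p => commute_X p) _).eq,
      mul_assoc, ← Matrix.map_mul, hUV, Matrix.map_one _ (map_zero _) (map_one _), mul_one]
  rw [charMat, charMat, Matrix.map_mul, Matrix.map_mul, hC, hC, Matrix.mul_sub, Matrix.sub_mul, hX]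

theorem sCharPoly_conj {U V : Matrix (Fin n) (Fin n) S} (hUV : U * V = 1)
    (A : Matrix (Fin n) (Fin n) R) :
    (U.map (algebraMap S R) * A * V.map (algebraMap S R)).sCharPoly = A.sCharPoly := by
  cases n with
  | zero => congr 1; exact Subsingleton.elim _ _
  | succ m =>
    rw [sCharPoly, sCharPoly, charMat_conj hUV, sdet_eq_doubleDet, sdet_eq_doubleDet,
      doubleDet_conj hUV]

theorem exists_map_algebraMap_center_eq {ι κ : Type*} {W : Matrix ι κ R}
    (hW : ∀ i j, W i j ∈ Set.center R) :
    ∃ W' : Matrix ι κ (Subring.center R), W'.map (algebraMap (Subring.center R) R) = W :=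
  ⟨Matrix.of fun i j => ⟨W i j, hW i j⟩, rfl⟩

end Matrix

end

theorem sCharPoly_conj_invariant_general
    {n : ℕ} {R : Type*} [Ring R] (A U V : Matrix (Fin n) (Fin n) R)
    (hU : ∀ i j : Fin n, U i j ∈ Set.center R)
    (hV : ∀ i j : Fin n, V i j ∈ Set.center R)
    (hUV : U * V = 1) :
    (U * A * V).sCharPoly = A.sCharPoly := by
  obtain ⟨U, rfl⟩ := Matrix.exists_map_algebraMap_center_eq hU
  obtain ⟨V, rfl⟩ := Matrix.exists_map_algebraMap_center_eq hV
  have hinj : Function.Injective (algebraMap (Subring.center R) R) := Subtype.val_injective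
  refine Matrix.sCharPoly_conj (Matrix.map_injective hinj ?_) A
  dsimp only
  rw [Matrix.map_mul, hUV, Matrix.map_one _ (map_zero _) (map_one _)]

/-- Invariance of the symmetric characteristic polynomial: if `U` is an invertible `n × n`
matrix whose entries (and the entries of its inverse `V`) lie in the centre `Z(R)` of `R`, then
the symmetric characteristic polynomial of `U A U⁻¹` equals that of `A`; in particular all its
coefficients are invariant under the conjugate action of `GLₙ(Z(R))` on `Mₙ(R)`. -/
theorem sCharPoly_conj_invariant
    {n : ℕ} {R : Type*} [Ring R] (A U V : Matrix (Fin n) (Fin n) R)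
    (hU : ∀ i j : Fin n, U i j ∈ Set.center R)
    (hV : ∀ i j : Fin n, V i j ∈ Set.center R)
    (hUV : U * V = 1) (hVU : V * U = 1) :
    (U * A * V).sCharPoly = A.sCharPoly :=
  sCharPoly_conj_invariant_general A U V hU hV hUV
end

section
/- Let K be a commutative ring and V a K-module. The exterior (Grassmann) algebra Λ(V) over V is Lie-nilpotent of index 2; that is, [[x,y],z] = 0 for all x, y, z ∈ Λ(V) (equivalently, every commutator [x,y] = xy − yx is central in Λ(V)). -/
open ExteriorAlgebra CliffordAlgebra

private theorem exterior_ι_mul_comm {K : Type*} [CommRing K] {V : Type*} [AddCommGroup V]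
    [Module K V] (v : V) (x : ExteriorAlgebra K V) :
    ExteriorAlgebra.ι K v * x = CliffordAlgebra.involute x * ExteriorAlgebra.ι K v := by
  induction x using CliffordAlgebra.induction with
  | algebraMap r => simp [Algebra.commutes]
  | ι w =>
      show ExteriorAlgebra.ι K v * ExteriorAlgebra.ι K w =
        CliffordAlgebra.involute (ExteriorAlgebra.ι K w) * ExteriorAlgebra.ι K v
      rw [show CliffordAlgebra.involute (ExteriorAlgebra.ι K w) = -(ExteriorAlgebra.ι K w)
        from CliffordAlgebra.involute_ι w, neg_mul]
      exact eq_neg_of_add_eq_zero_left (ExteriorAlgebra.ι_add_mul_swap v w)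
  | mul a b ha hb =>
      rw [map_mul, ← mul_assoc, ha, mul_assoc, hb, mul_assoc]
  | add a b ha hb =>
      rw [map_add, mul_add, ha, hb, add_mul]

private theorem exterior_central_of_involute_eq {K : Type*} [CommRing K] {V : Type*}
    [AddCommGroup V] [Module K V] {x : ExteriorAlgebra K V}
    (h : CliffordAlgebra.involute x = x) (z : ExteriorAlgebra K V) : x * z = z * x := by
  induction z using CliffordAlgebra.induction with
  | algebraMap r => exact (Algebra.commutes r x).symm
  | ι w => rw [exterior_ι_mul_comm, h]
  | mul a b ha hb => rw [← mul_assoc, ha, mul_assoc, hb, mul_assoc]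
  | add a b ha hb => rw [mul_add, ha, hb, add_mul]

private theorem exterior_comm_central {K : Type*} [CommRing K] {V : Type*}
    [AddCommGroup V] [Module K V] (x y z : ExteriorAlgebra K V) :
    (x * y - y * x) * z = z * (x * y - y * x) := by
  have htop : ∀ w : ExteriorAlgebra K V, w ∈ (CliffordAlgebra.evenOdd (0 : QuadraticForm K V) 0 ⊔
      CliffordAlgebra.evenOdd 0 1) := by
    rw [(CliffordAlgebra.evenOdd_isCompl (0 : QuadraticForm K V)).sup_eq_top]
    intro w; trivial
  obtain ⟨x0, hx0, x1, hx1, rfl⟩ := Submodule.mem_sup.mp (htop x)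
  obtain ⟨y0, hy0, y1, hy1, rfl⟩ := Submodule.mem_sup.mp (htop y)
  have heven : ∀ a : ExteriorAlgebra K V, a ∈ CliffordAlgebra.evenOdd 0 0 →
      ∀ w : ExteriorAlgebra K V, (a * w - w * a) = 0 := by
    intro a ha w
    rw [exterior_central_of_involute_eq (CliffordAlgebra.involute_eq_of_mem_even ha) w, sub_self]
  have h11 : ∀ w : ExteriorAlgebra K V,
      (x1 * y1 - y1 * x1) * w = w * (x1 * y1 - y1 * x1) := by
    intro w
    refine exterior_central_of_involute_eq ?_ w
    rw [map_sub, map_mul, map_mul, CliffordAlgebra.involute_eq_of_mem_odd hx1,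
      CliffordAlgebra.involute_eq_of_mem_odd hy1]
    noncomm_ring
  have expand : (x0 + x1) * (y0 + y1) - (y0 + y1) * (x0 + x1) =
      (x0 * (y0 + y1) - (y0 + y1) * x0) + ((x1 * y0 - y0 * x1) + (x1 * y1 - y1 * x1)) := by
    noncomm_ring
  have h10 : x1 * y0 - y0 * x1 = -(y0 * x1 - x1 * y0) := by noncomm_ring
  rw [expand, heven x0 hx0, h10, heven y0 hy0, neg_zero, zero_add, zero_add, h11]

/-- The exterior (Grassmann) algebra `Λ(V)` of a module `V` over a commutative ring `K` is
Lie-nilpotent of index 2: `[[x,y],z] = 0` for all `x, y, z ∈ Λ(V)`. -/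
theorem exteriorAlgebra_lie_nilpotent_of_index_two
    {K : Type*} [CommRing K] {V : Type*} [AddCommGroup V] [Module K V]
    (x y z : ExteriorAlgebra K V) :
    (x * y - y * x) * z - z * (x * y - y * x) = 0 := by
  rw [exterior_comm_central, sub_self]
end

section
/- Let R be a ring with 1 in which 2 is invertible (or R is 2-torsion-free), and suppose R satisfies the Lie-nilpotency identity [[x,y],z] = 0 for all x, y, z ∈ R. Then R satisfies the identity [x,y][x,z] = 0 for all x, y, z ∈ R. -/
/-- If `R` is a `2`-torsion-free ring (e.g. a ring in which `2` is invertible) satisfying the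
Lie-nilpotency identity `[[x,y],z] = 0`, then `R` satisfies the identity `[x,y][x,z] = 0`. -/
theorem commutator_mul_commutator_eq_zero_of_lie_nilpotent
    {R : Type*} [Ring R]
    (h2 : ∀ r : R, 2 * r = 0 → r = 0)
    (hR : ∀ x y z : R, (x * y - y * x) * z - z * (x * y - y * x) = 0) :
    ∀ x y z : R, (x * y - y * x) * (x * z - z * x) = 0 := by
  intro x y z
  have key : (x * y - y * x) * (x * z - z * x) =
      ((y * (x * z) - (x * z) * y) * x - x * (y * (x * z) - (x * z) * y))
      - x * ((y * z - z * y) * x - x * (y * z - z * y))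
      - ((y * x - x * y) * x - x * (y * x - x * y)) * z := by noncomm_ring
  rw [key, hR y (x * z) x, hR y z x, hR y x x]
  simp
end
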